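/- arXiv:1408.4053 — 2 statements merged into one kernel-verified Lean document; each statement's English description precedes it below -/
import Mathlib

section
/- Let N ≥ 2, d ≥ 2, let A = tridiag(−1, 2, −1) ∈ ℝ^{N×N} and define the d-dimensional discrete Laplacian Δ_d as the Kronecker sum with entries Δ_d(i,j) = Σ_{ℓ=1}^{d} A(i_ℓ, j_ℓ) · Π_{k≠ℓ} [i_k = j_k] on the index set (Fin d → Fin N)×(Fin d → Fin N). Then for every mode ℓ ∈ {1,…,d}, the mode-ℓ Tucker unfolding matrix of Δ_d, namely the matrix V_ℓ with row index (i_ℓ, j_ℓ) ∈ Fin N × Fin N and column index the collection of all remaining pairs (i_k, j_k), k ≠ ℓ, and entries V_ℓ = Δ_d(i,j), has matrix rank exactly 2. Hence the Tucker rank of Δ_d equals (2,…,2). -/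
/-!
Splitting off mode `ℓ`, the Kronecker sum satisfies `Δ_d = A ⊗ I + I ⊗ Δ_{d-1}`, so the mode-`ℓ`
unfolding is a sum of two outer products and has rank at most 2. Any nonzero off-diagonal entry
`A z o` yields nonsingular 2 × 2 minors on both sides: the rows `(z, z), (z, o)` separate `A` from
`I`, and the columns `(c, c), (c, c')`, where `c'` differs from the constant tuple `c = z` in a
single mode, separate `I` from `Δ_{d-1}`, since `Δ_{d-1} c c' = A z o`.
-/

/-- Insertion of a value at mode `ℓ` into a tuple indexed by the remaining modes. -/
def insertIdx {N d : ℕ} (ℓ : Fin d) (v : Fin N)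
    (c : {k : Fin d // k ≠ ℓ} → Fin N) : Fin d → Fin N :=
  fun k => if h : k = ℓ then v else c ⟨k, h⟩

namespace Matrix

variable {m n p K : Type*} [Fintype n] [Field K]

theorem rank_add_le (A B : Matrix m n K) : (A + B).rank ≤ A.rank + B.rank := by
  rw [rank, rank, rank, mulVecLin_add]
  exact (Submodule.finrank_mono (LinearMap.range_add_le _ _)).trans
    (Submodule.finrank_add_le_finrank_add_finrank _ _)

theorem card_le_rank_of_det_submatrix_ne_zero [Fintype p] [DecidableEq p] (A : Matrix m n K)
    (r : p → m) (c : p → n) (h : (A.submatrix r c).det ≠ 0) : Fintype.card p ≤ A.rank :=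
  rank_of_det_ne_zero h ▸ rank_submatrix_le A r c

theorem rank_vecMulVec_add_vecMulVec_eq_two (u₁ u₂ : m → K) (v₁ v₂ : n → K) (i₁ i₂ : m)
    (j₁ j₂ : n) (hu : u₁ i₁ * u₂ i₂ - u₁ i₂ * u₂ i₁ ≠ 0) (hv : v₁ j₁ * v₂ j₂ - v₁ j₂ * v₂ j₁ ≠ 0) :
    (vecMulVec u₁ v₁ + vecMulVec u₂ v₂).rank = 2 := by
  refine le_antisymm ?_ ?_
  · exact (rank_add_le _ _).trans (add_le_add (rank_vecMulVec_le _ _) (rank_vecMulVec_le _ _))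
  · have hminor : ((vecMulVec u₁ v₁ + vecMulVec u₂ v₂).submatrix ![i₁, i₂] ![j₁, j₂]).det =
        (u₁ i₁ * u₂ i₂ - u₁ i₂ * u₂ i₁) * (v₁ j₁ * v₂ j₂ - v₁ j₂ * v₂ j₁) := by
      simp only [det_fin_two, submatrix_apply, add_apply, vecMulVec_apply, cons_val_zero,
        cons_val_one]
      ring
    simpa using card_le_rank_of_det_submatrix_ne_zero _ ![i₁, i₂] ![j₁, j₂]
      (hminor ▸ mul_ne_zero hu hv)

end Matrix

section KroneckerSum

variable {ι n R : Type*} [Fintype ι] [DecidableEq ι] [DecidableEq n] [CommSemiring R]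

def kroneckerSum (A : Matrix n n R) : Matrix (ι → n) (ι → n) R :=
  fun i j => ∑ ℓ, A (i ℓ) (j ℓ) * ∏ k ∈ Finset.univ.erase ℓ, (if i k = j k then (1 : R) else 0)

theorem kroneckerSum_apply (A : Matrix n n R) (i j : ι → n) :
    kroneckerSum A i j = ∑ ℓ, if ∀ k ≠ ℓ, i k = j k then A (i ℓ) (j ℓ) else 0 := by
  refine Finset.sum_congr rfl fun ℓ _ => ?_
  simp [Finset.prod_boole]

theorem kroneckerSum_apply_update_of_ne (A : Matrix n n R) (c : ι → n) (m : ι) {w : n}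
    (hw : c m ≠ w) : kroneckerSum A c (Function.update c m w) = A (c m) w := by
  rw [kroneckerSum_apply, Finset.sum_eq_single m]
  · rw [if_pos fun k hk => (Function.update_of_ne hk w c).symm, Function.update_self]
  · intro m' _ hm'
    exact if_neg fun h => hw (by simpa using h m hm'.symm)
  · simp

end KroneckerSum

section InsertIdx

variable {N d : ℕ} (ℓ : Fin d)

@[simp]
theorem insertIdx_self (v : Fin N) (c : {k : Fin d // k ≠ ℓ} → Fin N) : insertIdx ℓ v c ℓ = v :=
  dif_pos rfl

@[simp]
theorem insertIdx_coe (v : Fin N) (c : {k : Fin d // k ≠ ℓ} → Fin N) (k : {k : Fin d // k ≠ ℓ}) :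
    insertIdx ℓ v c k = c k :=
  dif_neg k.2

theorem forall_insertIdx_eq_insertIdx_iff (P : Fin d → Prop) (v w : Fin N)
    (c e : {k : Fin d // k ≠ ℓ} → Fin N) :
    (∀ k, P k → insertIdx ℓ v c k = insertIdx ℓ w e k) ↔
      (P ℓ → v = w) ∧ ∀ k : {k : Fin d // k ≠ ℓ}, P k → c k = e k := by
  refine ⟨fun h => ⟨by simpa using h ℓ, fun k => by simpa using h k⟩, ?_⟩
  rintro ⟨hℓ, hc⟩ k hk
  by_cases hkℓ : k = ℓ
  · subst hkℓ
    simpa using hℓ hk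
  · simpa only [insertIdx, dif_neg hkℓ] using hc ⟨k, hkℓ⟩ hk

theorem kroneckerSum_insertIdx {R : Type*} [CommSemiring R] (A : Matrix (Fin N) (Fin N) R)
    (v w : Fin N) (c e : {k : Fin d // k ≠ ℓ} → Fin N) :
    kroneckerSum A (insertIdx ℓ v c) (insertIdx ℓ w e) =
      A v w * (1 : Matrix _ _ R) c e + (1 : Matrix _ _ R) v w * kroneckerSum A c e := by
  rw [kroneckerSum_apply, kroneckerSum_apply, Fintype.sum_eq_add_sum_subtype_ne _ ℓ,
    Finset.mul_sum]
  congr 1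
  · simp [forall_insertIdx_eq_insertIdx_iff, Matrix.one_apply, funext_iff]
  · refine Finset.sum_congr rfl fun m _ => ?_
    simp only [forall_insertIdx_eq_insertIdx_iff, Ne, m.2.symm, Matrix.one_apply,
      Subtype.ext_iff, not_false_eq_true, forall_const, ite_and, insertIdx_coe]
    split_ifs <;> simp

end InsertIdx

section ModeUnfolding

variable {N d : ℕ} {R : Type*}

def modeUnfolding (ℓ : Fin d) (M : Matrix (Fin d → Fin N) (Fin d → Fin N) R) :
    Matrix (Fin N × Fin N) (({k : Fin d // k ≠ ℓ} → Fin N) × ({k : Fin d // k ≠ ℓ} → Fin N)) R :=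
  Matrix.of fun a b => M (insertIdx ℓ a.1 b.1) (insertIdx ℓ a.2 b.2)

theorem modeUnfolding_kroneckerSum [CommSemiring R] (ℓ : Fin d) (A : Matrix (Fin N) (Fin N) R) :
    modeUnfolding ℓ (kroneckerSum A) =
      Matrix.vecMulVec (fun a => A a.1 a.2) (fun b => (1 : Matrix _ _ R) b.1 b.2) +
        Matrix.vecMulVec (fun a => (1 : Matrix _ _ R) a.1 a.2) (fun b => kroneckerSum A b.1 b.2) :=
  Matrix.ext fun _ _ => kroneckerSum_insertIdx ..

theorem rank_modeUnfolding_kroneckerSum [Field R] (hd : 2 ≤ d) (ℓ : Fin d)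
    (A : Matrix (Fin N) (Fin N) R) {z o : Fin N} (hzo : z ≠ o) (hA : A z o ≠ 0) :
    (modeUnfolding ℓ (kroneckerSum A)).rank = 2 := by
  obtain ⟨m⟩ : Nonempty {k : Fin d // k ≠ ℓ} := by
    obtain ⟨m, hm⟩ := Fintype.exists_ne_of_one_lt_card (by rw [Fintype.card_fin]; omega) ℓ
    exact ⟨⟨m, hm⟩⟩
  let c : {k : Fin d // k ≠ ℓ} → Fin N := fun _ => z
  have hc : c ≠ Function.update c m o := fun h => hzo (by simpa [c] using congrFun h m)
  rw [modeUnfolding_kroneckerSum]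
  refine Matrix.rank_vecMulVec_add_vecMulVec_eq_two _ _ _ _ (z, z) (z, o) (c, c)
    (c, Function.update c m o) ?_ ?_
  · simpa [hzo] using hA
  · simpa [hc, kroneckerSum_apply_update_of_ne _ c m hzo] using hA

end ModeUnfolding

/-- Every mode-`ℓ` Tucker unfolding matrix of the `d`-dimensional discrete Laplacian
(the Kronecker sum of `d` copies of `tridiag(−1,2,−1)`), whose rows are indexed by the
pair `(i_ℓ, j_ℓ)` and whose columns are indexed by all remaining pairs, has matrix rank
exactly 2; hence the Tucker rank of `Δ_d` equals `(2,…,2)`. -/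
theorem discrete_laplacian_tucker_unfolding_rank_eq_two
    (d N : ℕ) (hd : 2 ≤ d) (hN : 2 ≤ N)
    (A : Matrix (Fin N) (Fin N) ℝ)
    (hA : ∀ i j : Fin N, A i j =
      if (i : ℕ) = (j : ℕ) then 2
      else if (i : ℕ) + 1 = (j : ℕ) ∨ (j : ℕ) + 1 = (i : ℕ) then -1 else 0)
    (Δ : Matrix (Fin d → Fin N) (Fin d → Fin N) ℝ)
    (hΔ : ∀ i j, Δ i j = ∑ ℓ : Fin d, A (i ℓ) (j ℓ) *
      ∏ k ∈ Finset.univ.erase ℓ, (if i k = j k then (1 : ℝ) else 0))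
    (ℓ : Fin d)
    (V : Matrix (Fin N × Fin N)
        (({k : Fin d // k ≠ ℓ} → Fin N) × ({k : Fin d // k ≠ ℓ} → Fin N)) ℝ)
    (hV : ∀ a b, V a b =
      Δ (insertIdx ℓ a.1 b.1) (insertIdx ℓ a.2 b.2)) :
    V.rank = 2 := by
  obtain rfl : Δ = kroneckerSum A := Matrix.ext hΔ
  obtain rfl : V = modeUnfolding ℓ (kroneckerSum A) := Matrix.ext hV
  exact rank_modeUnfolding_kroneckerSum hd ℓ A (z := ⟨0, by omega⟩) (o := ⟨1, by omega⟩)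
    (by simp) (by simp [hA])
end

section
/- Let s > 0, λ_0 > 0, let (λ_k)_{k∈ℕ} be a sequence of reals with λ_k ≥ λ_0 for all k, and let (a_k)_{k∈ℕ} be a sequence of reals such that for every n ∈ ℕ the sequence (a_k λ_k^n)_k lies in ℓ²(ℕ) and the sum B := Σ_{n=0}^{∞} (s^n / n!) · ‖(a_k λ_k^n)_k‖_{ℓ²} is finite. Then there exist constants c > 0 and c_1 > 0 depending only on s (not on the sequences, on λ_0, or on p) such that for every natural number p: ‖( a_k · (λ_k/(λ_k+1))^{p} )_k‖_{ℓ²} ≤ c · e^{−c_1 √p} · B. -/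
/-!
Split the spectrum at a threshold `M`. Where `λ_k ≤ M`, `(λ_k/(λ_k+1))^p ≤ e^{-p/(M+1)}`, so that
part of `u_p` has norm at most `e^{-p/(M+1)} ‖a‖ ≤ e^{-p/(M+1)} B`. Where `λ_k ≥ M`, the factor is
at most `1 ≤ (λ_k/M)^n`, and `‖(a_k λ_k^n)_k‖ ≤ n!/s^n · B`, giving `n!/(sM)^n · B`.
With `M = √p` and `n = ⌊sM/e⌋`, the bound `n! ≤ n^n` makes the second term at most `e^{1-sM/e} B`,
while the first is at most `e^{-√p/2} B`.
-/

open Real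
open scoped Nat

lemma sqrt_tsum_sq_le_of_sq_le {ι : Type*} {f g h : ι → ℝ} {α β : ℝ} (hα : 0 ≤ α) (hβ : 0 ≤ β)
    (hg : Summable fun k => g k ^ 2) (hh : Summable fun k => h k ^ 2)
    (hf : ∀ k, f k ^ 2 ≤ α ^ 2 * g k ^ 2 + β ^ 2 * h k ^ 2) :
    √(∑' k, f k ^ 2) ≤ α * √(∑' k, g k ^ 2) + β * √(∑' k, h k ^ 2) := by
  have hsum : Summable fun k => α ^ 2 * g k ^ 2 + β ^ 2 * h k ^ 2 :=
    (hg.mul_left _).add (hh.mul_left _)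
  have hG : 0 ≤ ∑' k, g k ^ 2 := tsum_nonneg fun k => sq_nonneg (g k)
  have hH : 0 ≤ ∑' k, h k ^ 2 := tsum_nonneg fun k => sq_nonneg (h k)
  rw [sqrt_le_left (by positivity)]
  calc ∑' k, f k ^ 2 ≤ ∑' k, (α ^ 2 * g k ^ 2 + β ^ 2 * h k ^ 2) :=
        (hsum.of_nonneg_of_le (fun k => sq_nonneg _) hf).tsum_le_tsum hf hsum
    _ = α ^ 2 * ∑' k, g k ^ 2 + β ^ 2 * ∑' k, h k ^ 2 := by
        rw [(hg.mul_left _).tsum_add (hh.mul_left _), tsum_mul_left, tsum_mul_left]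
    _ ≤ (α * √(∑' k, g k ^ 2) + β * √(∑' k, h k ^ 2)) ^ 2 := by
        nlinarith [sq_sqrt hG, sq_sqrt hH, mul_nonneg (mul_nonneg hα hβ)
          (mul_nonneg (sqrt_nonneg (∑' k, g k ^ 2)) (sqrt_nonneg (∑' k, h k ^ 2)))]

lemma div_add_one_pow_le_exp {lam M : ℝ} (hlam : 0 ≤ lam) (hM : lam ≤ M) (p : ℕ) :
    (lam / (lam + 1)) ^ p ≤ exp (-p / (M + 1)) := by
  have hbase : lam / (lam + 1) ≤ exp (-(1 / (M + 1))) :=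
    calc lam / (lam + 1) = 1 - 1 / (lam + 1) := by field_simp; ring
      _ ≤ 1 - 1 / (M + 1) := by gcongr
      _ ≤ exp (-(1 / (M + 1))) := by linarith [add_one_le_exp (-(1 / (M + 1)))]
  calc (lam / (lam + 1)) ^ p ≤ exp (-(1 / (M + 1))) ^ p := by gcongr
    _ = exp (-p / (M + 1)) := by rw [← exp_nat_mul]; ring_nf

lemma sq_mul_div_add_one_pow_le {a lam M : ℝ} (hlam : 0 ≤ lam) (hM : 0 < M) (p n : ℕ) :
    (a * (lam / (lam + 1)) ^ p) ^ 2 ≤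
      exp (-p / (M + 1)) ^ 2 * a ^ 2 + (M⁻¹ ^ n) ^ 2 * (a * lam ^ n) ^ 2 := by
  rcases le_total lam M with hle | hge
  · have hsmall : (a * (lam / (lam + 1)) ^ p) ^ 2 ≤ exp (-p / (M + 1)) ^ 2 * a ^ 2 := by
      rw [mul_pow, mul_comm]
      gcongr
      exact div_add_one_pow_le_exp hlam hle p
    exact hsmall.trans (le_add_of_nonneg_right (by positivity))
  · have hcayley : (lam / (lam + 1)) ^ p ≤ 1 :=
      pow_le_one₀ (by positivity) (div_le_one_of_le₀ (by linarith) (by positivity))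
    have hpow : 1 ≤ M⁻¹ ^ n * lam ^ n := by
      rw [← mul_pow]
      exact one_le_pow₀ (by rw [inv_mul_eq_div, one_le_div hM]; exact hge)
    calc (a * (lam / (lam + 1)) ^ p) ^ 2 ≤ a ^ 2 := by
          rw [mul_pow]
          exact mul_le_of_le_one_right (sq_nonneg a) (pow_le_one₀ (by positivity) hcayley)
      _ ≤ a ^ 2 * (M⁻¹ ^ n * lam ^ n) ^ 2 := le_mul_of_one_le_right (sq_nonneg a) (one_le_pow₀ hpow)
      _ = (M⁻¹ ^ n) ^ 2 * (a * lam ^ n) ^ 2 := by ring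
      _ ≤ _ := le_add_of_nonneg_left (by positivity)

lemma factorial_floor_div_pow_le {x : ℝ} (hx : 0 < x) :
    (⌊x / exp 1⌋₊ ! : ℝ) / x ^ ⌊x / exp 1⌋₊ ≤ exp (1 - x / exp 1) := by
  set n := ⌊x / exp 1⌋₊
  have hn_le : (n : ℝ) ≤ x / exp 1 := Nat.floor_le (by positivity)
  have hn_gt : x / exp 1 < n + 1 := Nat.lt_floor_add_one _
  calc (n ! : ℝ) / x ^ n ≤ (n : ℝ) ^ n / x ^ n := by gcongr; exact_mod_cast n.factorial_le_pow
    _ = (n / x) ^ n := (div_pow _ _ _).symm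
    _ ≤ (exp 1)⁻¹ ^ n := by
        gcongr
        rw [div_le_iff₀ hx, inv_mul_eq_div]
        exact hn_le
    _ = exp (-n) := by rw [← exp_neg, ← exp_nat_mul]; ring_nf
    _ ≤ exp (1 - x / exp 1) := by gcongr; linarith

lemma sqrt_div_two_le_div_sqrt_add_one (p : ℕ) : √p / 2 ≤ p / (√p + 1) := by
  have hsq : √(p : ℝ) ^ 2 = p := sq_sqrt (by positivity)
  have hle : √(p : ℝ) ≤ p := by
    rw [sqrt_le_left (by positivity)]
    rcases p.eq_zero_or_pos with rfl | hp
    · simp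
    · have : (1 : ℝ) ≤ p := by exact_mod_cast hp
      nlinarith
  rw [div_le_div_iff₀ (by norm_num) (by positivity)]
  nlinarith [sqrt_nonneg (p : ℝ)]

lemma le_inv_mul_tsum {ι : Type*} {w N : ι → ℝ} (hw : ∀ i, 0 < w i) (hN : ∀ i, 0 ≤ N i)
    (hsum : Summable fun i => w i * N i) (i : ι) : N i ≤ (w i)⁻¹ * ∑' j, w j * N j := by
  rw [le_inv_mul_iff₀ (hw i)]
  exact hsum.le_tsum i fun j _ => mul_nonneg (hw j).le (hN j)

lemma sqrt_tsum_cayley_sq_le {s M : ℝ} (hs : 0 < s) (hM : 0 < M) {lam a : ℕ → ℝ}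
    (hlam : ∀ k, 0 ≤ lam k) (hS : ∀ n : ℕ, Summable fun k => (a k * lam k ^ n) ^ 2)
    (hB : Summable fun n : ℕ => s ^ n / (n ! : ℝ) * √(∑' k, (a k * lam k ^ n) ^ 2)) (p n : ℕ) :
    √(∑' k, (a k * (lam k / (lam k + 1)) ^ p) ^ 2) ≤
      (exp (-p / (M + 1)) + n ! / (s * M) ^ n) *
        ∑' n : ℕ, s ^ n / (n ! : ℝ) * √(∑' k, (a k * lam k ^ n) ^ 2) := by
  set B := ∑' n : ℕ, s ^ n / (n ! : ℝ) * √(∑' k, (a k * lam k ^ n) ^ 2)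
  have hmoment : ∀ n : ℕ, √(∑' k, (a k * lam k ^ n) ^ 2) ≤ n ! / s ^ n * B := fun n => by
    simpa only [inv_div] using
      le_inv_mul_tsum (fun n => by positivity) (fun n => sqrt_nonneg _) hB n
  calc √(∑' k, (a k * (lam k / (lam k + 1)) ^ p) ^ 2)
      ≤ exp (-p / (M + 1)) * √(∑' k, a k ^ 2) + M⁻¹ ^ n * √(∑' k, (a k * lam k ^ n) ^ 2) :=
        sqrt_tsum_sq_le_of_sq_le (exp_nonneg _) (by positivity) (by simpa using hS 0) (hS n)
          fun k => sq_mul_div_add_one_pow_le (hlam k) hM p n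
    _ ≤ exp (-p / (M + 1)) * B + M⁻¹ ^ n * (n ! / s ^ n * B) := by
        gcongr
        · simpa using hmoment 0
        · exact hmoment n
    _ = (exp (-p / (M + 1)) + n ! / (s * M) ^ n) * B := by
        rw [mul_pow, inv_pow]; field_simp

lemma exp_neg_div_add_factorial_div_le {s : ℝ} (hs : 0 < s) {p : ℕ} (hp : 0 < p) :
    exp (-p / (√p + 1)) + (⌊s * √p / exp 1⌋₊ ! : ℝ) / (s * √p) ^ ⌊s * √p / exp 1⌋₊ ≤
      (1 + exp 1) * exp (-min (1 / 2) (s / exp 1) * √p) := by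
  set c₁ := min (1 / 2) (s / exp 1)
  set M := √(p : ℝ)
  have hdiff : exp (-p / (M + 1)) ≤ exp (-c₁ * M) := by
    rw [neg_div, exp_le_exp, neg_mul, neg_le_neg_iff]
    calc c₁ * M ≤ M / 2 := by rw [div_eq_inv_mul]; gcongr; norm_num; exact min_le_left _ _
      _ ≤ p / (M + 1) := sqrt_div_two_le_div_sqrt_add_one p
  have hmoment : (⌊s * M / exp 1⌋₊ ! : ℝ) / (s * M) ^ ⌊s * M / exp 1⌋₊ ≤ exp 1 * exp (-c₁ * M) :=
    calc _ ≤ exp (1 - s * M / exp 1) := factorial_floor_div_pow_le (by positivity)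
      _ ≤ exp 1 * exp (-c₁ * M) := by
        rw [← exp_add, exp_le_exp, mul_div_right_comm, neg_mul, ← sub_eq_add_neg]
        gcongr
        exact min_le_right _ _
  linarith

/-- Exponential decay of Cayley-transform iterates of an `H`-analytic vector: if
`λ_k ≥ λ₀ > 0`, the sequences `(a_k λ_k^n)_k` are square-summable and
`B = Σ_n (s^n/n!) ‖(a_k λ_k^n)_k‖_{ℓ²}` is finite, then
`‖(a_k (λ_k/(λ_k+1))^p)_k‖_{ℓ²} ≤ c e^{−c₁√p} B` with constants `c, c₁ > 0` depending
only on `s`. -/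
theorem cayley_iterates_l2_decay
    (s : ℝ) (hs : 0 < s) :
    ∃ c c₁ : ℝ, 0 < c ∧ 0 < c₁ ∧
      ∀ (lam0 : ℝ), 0 < lam0 →
      ∀ (lam : ℕ → ℝ), (∀ k, lam0 ≤ lam k) →
      ∀ (a : ℕ → ℝ),
        (∀ n : ℕ, Summable (fun k => (a k * lam k ^ n) ^ 2)) →
        Summable (fun n : ℕ => s ^ n / (n.factorial : ℝ) *
          Real.sqrt (∑' k : ℕ, (a k * lam k ^ n) ^ 2)) →
        ∀ p : ℕ,
          Real.sqrt (∑' k : ℕ, (a k * (lam k / (lam k + 1)) ^ p) ^ 2) ≤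
            c * Real.exp (-c₁ * Real.sqrt p) *
              ∑' n : ℕ, s ^ n / (n.factorial : ℝ) *
                Real.sqrt (∑' k : ℕ, (a k * lam k ^ n) ^ 2) := by
  refine ⟨1 + exp 1, min (1 / 2) (s / exp 1), by positivity, by positivity, ?_⟩
  intro lam0 hlam0 lam hlam a hS hB p
  have hlam_nonneg : ∀ k, 0 ≤ lam k := fun k => hlam0.le.trans (hlam k)
  have hB0 : 0 ≤ ∑' n : ℕ, s ^ n / (n ! : ℝ) * √(∑' k, (a k * lam k ^ n) ^ 2) :=
    tsum_nonneg fun n => by positivity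
  rcases p.eq_zero_or_pos with rfl | hp
  · refine (sqrt_tsum_cayley_sq_le hs one_pos hlam_nonneg hS hB 0 0).trans
      (mul_le_mul_of_nonneg_right ?_ hB0)
    norm_num
    linarith [add_one_le_exp 1]
  · exact (sqrt_tsum_cayley_sq_le hs (M := √p) (by positivity) hlam_nonneg hS hB p _).trans
      (mul_le_mul_of_nonneg_right (exp_neg_div_add_factorial_div_le hs hp) hB0)
end
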